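/- Define S_m(x,y) = ∑_{k=0}^m [m+k choose k]_q ((y;q)_k/(x;q)_k) q^k. Then for every m ≥ 1: S_m(x,y) - ((x - q^{m+1})/(x - yq^{m+1})) S_{m-1}(x,y) = q^m ((q + x - q^{m+1}(1+q^m) y)/(x - q^{m+1} y)) [2m-1 choose m]_q (y;q)_m/(x;q)_m. -/

import Mathlib

/-!
The combination `(x - y q^(m+1)) t(m, k) - (x - q^(m+1)) t(m-1, k)` of the summands
`t(j, k) = [j+k choose k]_q (y;q)_k / (x;q)_k q^k` telescopes: it equals `G(k+1) - G(k)` with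
`G(0) = 0` and `G(k+1) = q^m [m+k choose k]_q (y;q)_(k+1) / (x;q)_(k+1) (q - x q^(k+1))`.
Summing over `k ≤ m`, the only survivors are `G(m+1)` and the summand `t(m-1, m)` that `S_(m-1)`
lacks, and these two combine to the right-hand side.
-/

noncomputable def qPoch (a q : ℂ) (n : ℕ) : ℂ := ∏ i ∈ Finset.range n, (1 - a * q ^ i)

noncomputable def qPochInf (a q : ℂ) : ℂ := ∏' i : ℕ, (1 - a * q ^ i)

noncomputable def qBinom (q : ℂ) (m k : ℕ) : ℂ :=
  if k ≤ m then qPoch q q m / (qPoch q q k * qPoch q q (m - k)) else 0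

open Finset

section QPochhammer

variable (a q : ℂ)

@[simp]
lemma qPoch_zero : qPoch a q 0 = 1 := prod_range_zero _

lemma qPoch_succ (n : ℕ) : qPoch a q (n + 1) = qPoch a q n * (1 - a * q ^ n) :=
  prod_range_succ _ n

variable {a q}

lemma one_sub_mul_pow_ne_zero_of_qPoch_ne_zero (ha : ∀ n, qPoch a q n ≠ 0) (n : ℕ) :
    1 - a * q ^ n ≠ 0 :=
  right_ne_zero_of_mul (qPoch_succ a q n ▸ ha (n + 1))

lemma qPoch_self_ne_zero (hq : ‖q‖ < 1) (n : ℕ) : qPoch q q n ≠ 0 := by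
  refine prod_ne_zero_iff.mpr fun i _ ↦ sub_ne_zero.mpr fun h ↦ ?_
  have : ‖q * q ^ i‖ < 1 := by
    rw [← pow_succ']; simpa using pow_lt_one₀ (norm_nonneg q) hq i.succ_ne_zero
  rw [← h] at this
  simp at this

lemma qBinom_add_left (a k : ℕ) :
    qBinom q (a + k) k = qPoch q q (a + k) / (qPoch q q k * qPoch q q a) := by
  rw [qBinom, if_pos (Nat.le_add_left k a), Nat.add_sub_cancel]

lemma qBinom_zero_right (hq : ∀ n, qPoch q q n ≠ 0) (n : ℕ) : qBinom q n 0 = 1 := by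
  rw [← add_zero n, qBinom_add_left, add_zero, qPoch_zero, one_mul, div_self (hq n)]

end QPochhammer

noncomputable def qSumTerm (q x y : ℂ) (j k : ℕ) : ℂ :=
  qBinom q (j + k) k * (qPoch y q k / qPoch x q k) * q ^ k

noncomputable def qSum (q x y : ℂ) (j : ℕ) : ℂ :=
  ∑ k ∈ range (j + 1), qSumTerm q x y j k

noncomputable def telescoper (q x y : ℂ) (M : ℕ) : ℕ → ℂ
  | 0 => 0
  | K + 1 => q ^ (M + 1) * qBinom q (M + 1 + K) K *
      (qPoch y q (K + 1) / qPoch x q (K + 1)) * (q - x * q ^ (K + 1))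

section Telescoping

variable {q x y : ℂ} (hq : ∀ n, qPoch q q n ≠ 0) (hx : ∀ n, qPoch x q n ≠ 0)
include hq hx

lemma qSumTerm_comb_eq_telescoper_sub (M K : ℕ) :
    (x - y * q ^ (M + 2)) * qSumTerm q x y (M + 1) K - (x - q ^ (M + 2)) * qSumTerm q x y M K =
      telescoper q x y M (K + 1) - telescoper q x y M K := by
  cases K with
  | zero =>
    have hx0 : 1 - x ≠ 0 := by simpa using one_sub_mul_pow_ne_zero_of_qPoch_ne_zero hx 0
    simp only [qSumTerm, telescoper, qBinom_zero_right hq, qPoch_succ, qPoch_zero]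
    field_simp
    ring
  | succ K =>
    simp only [qSumTerm, telescoper]
    rw [qBinom_add_left (M + 1) (K + 1), qBinom_add_left M (K + 1), qBinom_add_left (M + 1) K,
      show M + 1 + (K + 1) = M + K + 1 + 1 by omega, show M + (K + 1) = M + K + 1 by omega,
      show M + 1 + K = M + K + 1 by omega]
    field_simp [hq M, hq K, hq (M + 1), hq (K + 1), hx (K + 1), hx (K + 2)]
    rw [qPoch_succ q q (M + K + 1), qPoch_succ q q M, qPoch_succ q q K,
      qPoch_succ y q (K + 1), qPoch_succ x q (K + 1)]
    ring

lemma sum_qSumTerm_comb_eq_telescoper (M n : ℕ) :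
    ∑ k ∈ range n,
      ((x - y * q ^ (M + 2)) * qSumTerm q x y (M + 1) k - (x - q ^ (M + 2)) * qSumTerm q x y M k) =
      telescoper q x y M n := by
  rw [sum_congr rfl fun k _ ↦ qSumTerm_comb_eq_telescoper_sub hq hx M k, sum_range_sub,
    telescoper, sub_zero]

lemma telescoper_add_qSumTerm (M : ℕ) :
    telescoper q x y M (M + 2) + (x - q ^ (M + 2)) * qSumTerm q x y M (M + 1) =
      q ^ (M + 1) * (q + x - q ^ (M + 2) * (1 + q ^ (M + 1)) * y) *
        qBinom q (M + (M + 1)) (M + 1) * (qPoch y q (M + 1) / qPoch x q (M + 1)) := by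
  rw [telescoper, qSumTerm, qBinom_add_left (M + 1) (M + 1), qBinom_add_left M (M + 1),
    show M + 1 + (M + 1) = M + (M + 1) + 1 by omega]
  field_simp [hq M, hq (M + 1), hx (M + 1), hx (M + 2)]
  rw [qPoch_succ q q (M + (M + 1)), qPoch_succ q q M, qPoch_succ y q (M + 1),
    qPoch_succ x q (M + 1)]
  ring

lemma qSum_succ_comb (M : ℕ) :
    (x - y * q ^ (M + 2)) * qSum q x y (M + 1) - (x - q ^ (M + 2)) * qSum q x y M =
      q ^ (M + 1) * (q + x - q ^ (M + 2) * (1 + q ^ (M + 1)) * y) *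
        qBinom q (M + (M + 1)) (M + 1) * (qPoch y q (M + 1) / qPoch x q (M + 1)) := by
  have hM : qSum q x y M =
      ∑ k ∈ range (M + 2), qSumTerm q x y M k - qSumTerm q x y M (M + 1) := by
    rw [qSum, sum_range_succ _ (M + 1), add_sub_cancel_right]
  rw [← telescoper_add_qSumTerm hq hx, ← sum_qSumTerm_comb_eq_telescoper hq hx, sum_sub_distrib,
    ← mul_sum, ← mul_sum, hM, qSum]
  ring

end Telescoping

theorem stmt_18_general (q x y : ℂ) (m : ℕ) (hm : 1 ≤ m) (hq1 : ‖q‖ < 1)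
    (hx : ∀ k, qPoch x q k ≠ 0) (hxy : x ≠ y * q ^ (m + 1))
    (S : ℕ → ℂ)
    (hS : ∀ j, S j = ∑ k ∈ Finset.range (j + 1),
      qBinom q (j + k) k * (qPoch y q k / qPoch x q k) * q ^ k) :
    S m - ((x - q ^ (m + 1)) / (x - y * q ^ (m + 1))) * S (m - 1) =
    q ^ m * ((q + x - q ^ (m + 1) * (1 + q ^ m) * y) / (x - q ^ (m + 1) * y)) *
      qBinom q (2 * m - 1) m * (qPoch y q m / qPoch x q m) := by
  obtain ⟨M, rfl⟩ : ∃ M, m = M + 1 := ⟨m - 1, by omega⟩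
  obtain rfl : S = qSum q x y := funext hS
  have hxy' : x - y * q ^ (M + 2) ≠ 0 := sub_ne_zero.mpr hxy
  have hxy'' : x - q ^ (M + 2) * y ≠ 0 := mul_comm y (q ^ (M + 2)) ▸ hxy'
  rw [show 2 * (M + 1) - 1 = M + (M + 1) by omega, Nat.add_sub_cancel]
  field_simp
  linear_combination qSum_succ_comb (y := y) (qPoch_self_ne_zero hq1) hx M

theorem stmt_18 (q x y : ℂ) (m : ℕ) (hm : 1 ≤ m) (hq0 : 0 < ‖q‖) (hq1 : ‖q‖ < 1)
    (hx : ∀ k, qPoch x q k ≠ 0) (hxy : x ≠ y * q ^ (m + 1))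
    (S : ℕ → ℂ)
    (hS : ∀ j, S j = ∑ k ∈ Finset.range (j + 1),
      qBinom q (j + k) k * (qPoch y q k / qPoch x q k) * q ^ k) :
    S m - ((x - q ^ (m + 1)) / (x - y * q ^ (m + 1))) * S (m - 1) =
    q ^ m * ((q + x - q ^ (m + 1) * (1 + q ^ m) * y) / (x - q ^ (m + 1) * y)) *
      qBinom q (2 * m - 1) m * (qPoch y q m / qPoch x q m) :=
  stmt_18_general q x y m hm hq1 hx hxy S hS
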